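/- Let A, B ∈ ℍ², let u ∈ T_A ℍ², v ∈ T_B ℍ², A_t = exp_A(tu), B_t = exp_B(tv), and E(t) = (1/2) d(A_t, B_t)². Then E''(0) ≥ ‖u − P v‖², where P v denotes the parallel transport of v along the geodesic segment from B to A. -/

import Mathlib

noncomputable section

/-- The Minkowski bilinear form on `ℝ^{n,1}`. -/
def mink (n : ℕ) (x y : Fin (n+1) → ℝ) : ℝ :=
  (∑ i : Fin n, x i.castSucc * y i.castSucc) - x (Fin.last n) * y (Fin.last n)

/-- Membership in the hyperboloid model of hyperbolic `n`-space. -/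
def IsHyp (n : ℕ) (x : Fin (n+1) → ℝ) : Prop :=
  mink n x x = -1 ∧ 0 < x (Fin.last n)

/-- Tangency to the hyperboloid at `x`. -/
def IsTang (n : ℕ) (x v : Fin (n+1) → ℝ) : Prop := mink n x v = 0

/-- Inverse hyperbolic cosine. -/
def acosh (x : ℝ) : ℝ := Real.log (x + Real.sqrt (x ^ 2 - 1))

/-- Hyperbolic distance in the hyperboloid model: `cosh (dist x y) = -⟨x,y⟩`. -/
def hdist (n : ℕ) (x y : Fin (n+1) → ℝ) : ℝ := acosh (-(mink n x y))

/-- Norm of a tangent vector (the Minkowski form is positive definite on tangent spaces). -/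
def tnorm (n : ℕ) (v : Fin (n+1) → ℝ) : ℝ := Real.sqrt (mink n v v)

/-- The Riemannian exponential map of the hyperboloid. -/
def hexp (n : ℕ) (x v : Fin (n+1) → ℝ) : Fin (n+1) → ℝ :=
  Real.cosh (tnorm n v) • x + (Real.sinh (tnorm n v) / tnorm n v) • v

/-- Unit tangent vector at `x` pointing towards `y`. -/
def hdir (n : ℕ) (x y : Fin (n+1) → ℝ) : Fin (n+1) → ℝ :=
  (Real.sinh (hdist n x y))⁻¹ • (y + (mink n x y) • x)

/-- The inverse exponential map `exp_x⁻¹ (y)`. -/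
def hlog (n : ℕ) (x y : Fin (n+1) → ℝ) : Fin (n+1) → ℝ :=
  hdist n x y • hdir n x y

/-- Parallel transport from `T_y ℍⁿ` to `T_x ℍⁿ` along the geodesic from `y` to `x`. -/
def ptrans (n : ℕ) (x y v : Fin (n+1) → ℝ) : Fin (n+1) → ℝ :=
  v + ((mink n x v) / (1 - mink n x y)) • (x + y)

/-- Minkowski volume form on `ℝ^{2,1}`; `det3 x u w = ‖u‖‖w‖ sin θ` for tangent
vectors `u, w` at `x ∈ ℍ²`, where `θ` is the oriented angle from `u` to `w`. -/
def det3 (a b c : Fin 3 → ℝ) : ℝ :=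
  a 0 * (b 1 * c 2 - b 2 * c 1) - a 1 * (b 0 * c 2 - b 2 * c 0)
    + a 2 * (b 0 * c 1 - b 1 * c 0)

/-- `sinhc x = sinh x / x`, with `sinhc 0 = 1`. -/
def sinhc (x : ℝ) : ℝ := if x = 0 then 1 else Real.sinh x / x

/-!
On the hyperboloid `exp_A (t u) = cosh (t ‖u‖) A + (sinh (t ‖u‖) / ‖u‖) u`, so
`cosh d(A_t, B_t) = c t := -⟨A_t, B_t⟩` is explicit, with `c 0 = k := -⟨A, B⟩`,
`c' 0 = -(⟨u, B⟩ + ⟨A, v⟩)`, `c'' 0 = k (‖u‖² + ‖v‖²) - 2 ⟨u, v⟩`, and `E t = ½ arcosh (c t) ²`.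
The derivative `1 / sinhc (arcosh y)` of `½ arcosh² y` extends continuously to `y = 1`, which
gives `E'' 0` also in the case `k = 1`, where `c' 0 = 0`.

In dimension two the normal components `X = det (A, B, u)`, `Y = det (A, B, v)` satisfy Gram
identities expressing `‖u‖²`, `‖v‖²`, `⟨u, v⟩` through `X`, `Y`, `⟨u, B⟩`, `⟨A, v⟩`. With
`d = arcosh k` and `s = sinh d` they give
`s³ (E'' 0 - ‖u - P v‖²) = d (k (X² + Y²) - 2 X Y) - s (X - Y)²`,
which is nonnegative because `2 sinh d ≤ d (cosh d + 1)`. For `k = 1` they force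
`⟨u, B⟩ = ⟨A, v⟩ = 0`, and both sides equal `‖u - v‖²`.
-/

open Filter Topology Set Real

section Minkowski

variable {n : ℕ}

lemma mink_comm (x y : Fin (n+1) → ℝ) : mink n x y = mink n y x := by
  simp only [mink, mul_comm]

lemma mink_add_left (x y z : Fin (n+1) → ℝ) : mink n (x + y) z = mink n x z + mink n y z := by
  simp only [mink, Pi.add_apply, add_mul, Finset.sum_add_distrib]; ring

lemma mink_sub_left (x y z : Fin (n+1) → ℝ) : mink n (x - y) z = mink n x z - mink n y z := by
  simp only [mink, Pi.sub_apply, sub_mul, Finset.sum_sub_distrib]; ring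

lemma mink_smul_left (a : ℝ) (x y : Fin (n+1) → ℝ) : mink n (a • x) y = a * mink n x y := by
  simp only [mink, Pi.smul_apply, smul_eq_mul, mul_assoc, ← Finset.mul_sum]; ring

lemma mink_add_right (x y z : Fin (n+1) → ℝ) : mink n x (y + z) = mink n x y + mink n x z := by
  simp only [mink_comm x, mink_add_left]

lemma mink_sub_right (x y z : Fin (n+1) → ℝ) : mink n x (y - z) = mink n x y - mink n x z := by
  simp only [mink_comm x, mink_sub_left]

lemma mink_smul_right (a : ℝ) (x y : Fin (n+1) → ℝ) : mink n x (a • y) = a * mink n x y := by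
  simp only [mink_comm x, mink_smul_left]

lemma HasDerivAt.mink {f g : ℝ → Fin (n+1) → ℝ} {f' g' : Fin (n+1) → ℝ} {t : ℝ}
    (hf : HasDerivAt f f' t) (hg : HasDerivAt g g' t) :
    HasDerivAt (fun s => mink n (f s) (g s)) (mink n f' (g t) + mink n (f t) g') t := by
  have hfi := hasDerivAt_pi.1 hf
  have hgi := hasDerivAt_pi.1 hg
  refine ((HasDerivAt.fun_sum (u := Finset.univ) fun (i : Fin n) _ =>
    (hfi i.castSucc).fun_mul (hgi i.castSucc)).fun_sub
      ((hfi (Fin.last n)).fun_mul (hgi (Fin.last n)))).congr_deriv ?_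
  simp only [_root_.mink, Finset.sum_add_distrib]; ring

lemma IsHyp.one_le_neg_mink {x y : Fin (n+1) → ℝ} (hx : IsHyp n x) (hy : IsHyp n y) :
    1 ≤ -mink n x y := by
  obtain ⟨hxx, hxn⟩ := hx
  obtain ⟨hyy, hyn⟩ := hy
  unfold mink at *
  set P := ∑ i : Fin n, x i.castSucc * y i.castSucc
  have hCS : P ^ 2 ≤ (∑ i : Fin n, x i.castSucc ^ 2) * ∑ i : Fin n, y i.castSucc ^ 2 :=
    Finset.sum_mul_sq_le_sq_mul_sq _ _ _
  have hAM : 0 ≤ ∑ i : Fin n, (x i.castSucc - y i.castSucc) ^ 2 :=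
    Finset.sum_nonneg fun i _ => sq_nonneg _
  simp only [sub_sq, Finset.sum_add_distrib, Finset.sum_sub_distrib, mul_assoc,
    ← Finset.mul_sum] at hAM
  simp only [← sq] at hxx hyy
  nlinarith [mul_pos hxn hyn]

lemma IsHyp.mink_self_pos {x v : Fin (n+1) → ℝ} (hx : IsHyp n x) (hv : IsTang n x v)
    (hv0 : v ≠ 0) : 0 < mink n v v := by
  obtain ⟨hxx, hxn⟩ := hx
  unfold IsTang mink at *
  simp only [← sq] at hxx ⊢
  have hCS : (∑ i : Fin n, x i.castSucc * v i.castSucc) ^ 2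
      ≤ (∑ i : Fin n, x i.castSucc ^ 2) * ∑ i : Fin n, v i.castSucc ^ 2 :=
    Finset.sum_mul_sq_le_sq_mul_sq _ _ _
  set T := ∑ i : Fin n, v i.castSucc ^ 2
  have key : T ≤ x (Fin.last n) ^ 2 * (T - v (Fin.last n) ^ 2) := by
    have hS : ∑ i : Fin n, x i.castSucc ^ 2 = x (Fin.last n) ^ 2 - 1 := by linarith
    rw [sub_eq_zero.1 hv, hS] at hCS
    nlinarith
  have hT : 0 < T := by
    refine (Finset.sum_nonneg fun i _ => sq_nonneg _).lt_of_ne fun hT0 => hv0 ?_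
    have hlast : v (Fin.last n) = 0 := by
      rw [show T = 0 from hT0.symm] at key
      have h0 : x (Fin.last n) ^ 2 * v (Fin.last n) ^ 2 = 0 := by
        nlinarith [mul_nonneg (sq_nonneg (x (Fin.last n))) (sq_nonneg (v (Fin.last n)))]
      simpa [hxn.ne'] using h0
    have hcast : ∀ i : Fin n, v i.castSucc = 0 := fun i => pow_eq_zero_iff two_ne_zero |>.1
      ((Finset.sum_eq_zero_iff_of_nonneg fun i _ => sq_nonneg _).1 hT0.symm i (by simp))
    funext i
    exact Fin.lastCases hlast hcast i
  nlinarith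

lemma mink_sub_ptrans_self {x y u v : Fin (n+1) → ℝ} (hx : mink n x x = -1)
    (hy : mink n y y = -1) (hu : IsTang n x u) (hv : IsTang n y v) (hxy : mink n x y ≠ 1) :
    mink n (u - ptrans n x y v) (u - ptrans n x y v)
      = mink n u u + mink n v v - 2 * mink n u v
        - 2 * (mink n x v * mink n u y) / (1 - mink n x y) := by
  unfold IsTang at hu hv
  have hux : mink n u x = 0 := by rw [mink_comm]; exact hu
  have hvy : mink n v y = 0 := by rw [mink_comm]; exact hv
  have hne : 1 - mink n x y ≠ 0 := sub_ne_zero.2 (Ne.symm hxy)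
  simp only [ptrans, mink_sub_left, mink_sub_right, mink_add_left, mink_add_right, mink_smul_left,
    mink_smul_right, hx, hy, hu, hv, hux, hvy, mink_comm v u, mink_comm v x, mink_comm y x,
    mink_comm y u]
  field_simp
  ring

end Minkowski

section Geodesic

variable {n : ℕ}

def ch (a t : ℝ) : ℝ := cosh (t * a)

def sh (a t : ℝ) : ℝ := if a = 0 then t else sinh (t * a) / a

@[simp] lemma ch_zero_right (a : ℝ) : ch a 0 = 1 := by simp [ch]

@[simp] lemma sh_zero_right (a : ℝ) : sh a 0 = 0 := by simp [sh]

lemma hasDerivAt_sh (a t : ℝ) : HasDerivAt (sh a) (ch a t) t := by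
  by_cases ha : a = 0
  · rw [show sh a = fun t => t from funext fun t => if_pos ha]
    simpa [ch, ha] using hasDerivAt_id' t
  · rw [show sh a = fun t => sinh (t * a) / a from funext fun t => if_neg ha]
    refine ((((hasDerivAt_id' t).mul_const a).sinh).div_const a).congr_deriv ?_
    rw [ch]
    field_simp

lemma hasDerivAt_ch (a t : ℝ) : HasDerivAt (ch a) (a ^ 2 * sh a t) t := by
  by_cases ha : a = 0
  · rw [show ch a = fun _ => 1 from funext fun t => by simp [ch, ha]]
    simpa [ha] using hasDerivAt_const t (1 : ℝ)
  · refine (((hasDerivAt_id' t).mul_const a).cosh).congr_deriv ?_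
    simp only [sh, if_neg ha]
    field_simp

lemma ch_sq_sub_sq_mul_sh_sq (a t : ℝ) : ch a t ^ 2 - a ^ 2 * sh a t ^ 2 = 1 := by
  by_cases ha : a = 0
  · simp [ch, ha]
  · simp only [ch, sh, if_neg ha, div_pow]
    field_simp
    exact cosh_sq_sub_sinh_sq _

/-- The geodesic through `x` with initial velocity `u`, when `a` is the norm of `u`. -/
def geodesic (a : ℝ) (x u : Fin (n+1) → ℝ) (t : ℝ) : Fin (n+1) → ℝ := ch a t • x + sh a t • u

def geodesicVel (a : ℝ) (x u : Fin (n+1) → ℝ) (t : ℝ) : Fin (n+1) → ℝ :=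
  (a ^ 2 * sh a t) • x + ch a t • u

@[simp] lemma geodesic_zero (a : ℝ) (x u : Fin (n+1) → ℝ) : geodesic a x u 0 = x := by
  simp [geodesic]

@[simp] lemma geodesicVel_zero (a : ℝ) (x u : Fin (n+1) → ℝ) : geodesicVel a x u 0 = u := by
  simp [geodesicVel]

lemma hasDerivAt_geodesic (a : ℝ) (x u : Fin (n+1) → ℝ) (t : ℝ) :
    HasDerivAt (geodesic a x u) (geodesicVel a x u t) t :=
  ((hasDerivAt_ch a t).smul_const x).fun_add ((hasDerivAt_sh a t).smul_const u)

lemma hasDerivAt_geodesicVel (a : ℝ) (x u : Fin (n+1) → ℝ) (t : ℝ) :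
    HasDerivAt (geodesicVel a x u) (a ^ 2 • geodesic a x u t) t := by
  refine ((((hasDerivAt_sh a t).const_mul (a ^ 2)).smul_const x).fun_add
    ((hasDerivAt_ch a t).smul_const u)).congr_deriv ?_
  simp only [geodesic, smul_add, smul_smul]

lemma IsHyp.tnorm_sq {x u : Fin (n+1) → ℝ} (hx : IsHyp n x) (hu : IsTang n x u) :
    tnorm n u ^ 2 = mink n u u := by
  rcases eq_or_ne u 0 with rfl | hu0
  · simp [tnorm, mink]
  · exact sq_sqrt (hx.mink_self_pos hu hu0).le

lemma tnorm_smul (t : ℝ) (u : Fin (n+1) → ℝ) :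
    tnorm n (t • u) = |t| * tnorm n u := by
  rw [tnorm, tnorm, mink_smul_left, mink_smul_right, ← mul_assoc, ← sq, sqrt_mul (sq_nonneg t),
    sqrt_sq_eq_abs]

lemma hexp_smul_eq_geodesic {x u : Fin (n+1) → ℝ} (hx : IsHyp n x) (hu : IsTang n x u) (t : ℝ) :
    hexp n x (t • u) = geodesic (tnorm n u) x u t := by
  rcases eq_or_ne u 0 with rfl | hu0
  · simp [hexp, geodesic, tnorm, ch, mink]
  have ha : 0 < tnorm n u := sqrt_pos.2 (hx.mink_self_pos hu hu0)
  have habs : |t| * tnorm n u = |t * tnorm n u| := by rw [abs_mul, abs_of_pos ha]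
  have hsinh :
      sinh (|t| * tnorm n u) / (|t| * tnorm n u) * t = sinh (t * tnorm n u) / tnorm n u := by
    rcases eq_or_ne t 0 with rfl | ht0
    · simp
    rcases abs_cases t with ⟨ht, -⟩ | ⟨ht, -⟩ <;> rw [ht]
    · field_simp
    · rw [neg_mul, sinh_neg]
      field_simp
  rw [hexp, geodesic, ch, sh, if_neg ha.ne', tnorm_smul, smul_smul,
    hsinh, habs, cosh_abs]

lemma eventually_isHyp_geodesic {x u : Fin (n+1) → ℝ} (hx : IsHyp n x) (hu : IsTang n x u) :
    ∀ᶠ t in 𝓝 0, IsHyp n (geodesic (tnorm n u) x u t) := by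
  have hlast : ContinuousAt (fun t => geodesic (tnorm n u) x u t (Fin.last n)) 0 :=
    (continuous_apply _).continuousAt.comp (hasDerivAt_geodesic _ x u 0).continuousAt
  filter_upwards [hlast.eventually (lt_mem_nhds (by simpa using hx.2))] with t ht
  refine ⟨?_, ht⟩
  have hxu : mink n x u = 0 := hu
  have hux : mink n u x = 0 := by rw [mink_comm]; exact hu
  simp only [geodesic, mink_add_left, mink_add_right, mink_smul_left, mink_smul_right, hx.1,
    hxu, hux, ← hx.tnorm_sq hu]
  linear_combination -ch_sq_sub_sq_mul_sh_sq (tnorm n u) t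

lemma eventually_one_le_neg_mink_geodesic {x y u v : Fin (n+1) → ℝ} (hx : IsHyp n x)
    (hu : IsTang n x u) (hy : IsHyp n y) (hv : IsTang n y v) :
    ∀ᶠ t in 𝓝 0, 1 ≤ -mink n (geodesic (tnorm n u) x u t) (geodesic (tnorm n v) y v t) :=
  ((eventually_isHyp_geodesic hx hu).and (eventually_isHyp_geodesic hy hv)).mono
    fun _ h => h.1.one_le_neg_mink h.2

lemma acosh_eq_arcosh : acosh = arcosh := rfl

lemma hdist_hexp_smul {x y u v : Fin (n+1) → ℝ} (hx : IsHyp n x) (hu : IsTang n x u)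
    (hy : IsHyp n y) (hv : IsTang n y v) (t : ℝ) :
    hdist n (hexp n x (t • u)) (hexp n y (t • v))
      = arcosh (-mink n (geodesic (tnorm n u) x u t) (geodesic (tnorm n v) y v t)) := by
  rw [hexp_smul_eq_geodesic hx hu, hexp_smul_eq_geodesic hy hv, hdist, acosh_eq_arcosh]

lemma hasDerivAt_neg_mink_geodesic (a b : ℝ) (x y u v : Fin (n+1) → ℝ) :
    ∃ c' : ℝ → ℝ,
      (∀ t, HasDerivAt (fun t => -mink n (geodesic a x u t) (geodesic b y v t)) (c' t) t) ∧
      c' 0 = -(mink n u y + mink n x v) ∧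
      HasDerivAt c' (-((a ^ 2 + b ^ 2) * mink n x y + 2 * mink n u v)) 0 := by
  refine ⟨fun t => -(mink n (geodesicVel a x u t) (geodesic b y v t)
    + mink n (geodesic a x u t) (geodesicVel b y v t)), fun t => ?_, by simp, ?_⟩
  · exact ((hasDerivAt_geodesic a x u t).mink (hasDerivAt_geodesic b y v t)).neg
  · refine ((((hasDerivAt_geodesicVel a x u 0).mink (hasDerivAt_geodesic b y v 0)).add
      ((hasDerivAt_geodesic a x u 0).mink (hasDerivAt_geodesicVel b y v 0))).neg).congr_deriv ?_
    simp only [geodesic_zero, geodesicVel_zero, mink_smul_left, mink_smul_right]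
    ring

end Geodesic

section HalfSqArcosh

lemma continuousAt_sinhc_zero : ContinuousAt sinhc 0 := by
  classical
  have h := (hasDerivAt_sinh 0).continuousAt_div
  rwa [show Function.update (fun x => (sinh x - sinh 0) / (x - 0)) 0 (cosh 0) = sinhc from
    funext fun x => by by_cases hx : x = 0 <;> simp [sinhc, hx]] at h

lemma inv_sinhc_arcosh {y : ℝ} (hy : 1 < y) : (sinhc (arcosh y))⁻¹ = arcosh y / √(y ^ 2 - 1) := by
  rw [sinhc, if_neg (arcosh_pos hy).ne', sinh_arcosh hy.le, inv_div]

lemma tendsto_inv_sinhc_arcosh_one : Tendsto (fun y => (sinhc (arcosh y))⁻¹) (𝓝[≥] 1) (𝓝 1) := by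
  have harcosh : Tendsto arcosh (𝓝[≥] 1) (𝓝 0) := by
    have h := continuousOn_arcosh.continuousWithinAt (self_mem_Ici (a := (1 : ℝ)))
    rwa [ContinuousWithinAt, arcosh_zero] at h
  simpa [sinhc] using ((continuousAt_sinhc_zero.tendsto.comp harcosh).inv₀ (by simp [sinhc]))

lemma hasDerivAt_half_sq_arcosh {y : ℝ} (hy : 1 < y) :
    HasDerivAt (fun y => 1 / 2 * arcosh y ^ 2) (sinhc (arcosh y))⁻¹ y := by
  refine (((hasDerivAt_arcosh hy).pow 2).const_mul (1 / 2)).congr_deriv ?_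
  rw [inv_sinhc_arcosh hy]
  ring

lemma hasDerivWithinAt_half_sq_arcosh {y : ℝ} (hy : 1 ≤ y) :
    HasDerivWithinAt (fun y => 1 / 2 * arcosh y ^ 2) (sinhc (arcosh y))⁻¹ (Ici 1) y := by
  rcases hy.eq_or_lt with rfl | hy
  · have h := hasDerivWithinAt_Ici_of_tendsto_deriv (s := Ioi 1) (e := 1)
      (fun y hy => (hasDerivAt_half_sq_arcosh hy).differentiableAt.differentiableWithinAt)
      (((continuousOn_arcosh.continuousWithinAt self_mem_Ici).pow 2).const_mul (1 / 2)
        |>.mono Ioi_subset_Ici_self)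
      self_mem_nhdsWithin
      ((tendsto_inv_sinhc_arcosh_one.mono_left (nhdsWithin_mono _ Ioi_subset_Ici_self)).congr'
        (eventually_nhdsWithin_of_forall fun y hy => (hasDerivAt_half_sq_arcosh hy).deriv.symm))
    simpa [sinhc] using h
  · exact (hasDerivAt_half_sq_arcosh hy).hasDerivWithinAt

variable {c c' : ℝ → ℝ} {x c'' : ℝ}

lemma deriv_half_sq_arcosh_comp_eventuallyEq (hc : ∀ t, HasDerivAt c (c' t) t)
    (h1 : ∀ᶠ t in 𝓝 x, 1 ≤ c t) :
    deriv (fun t => 1 / 2 * arcosh (c t) ^ 2) =ᶠ[𝓝 x] fun t => (sinhc (arcosh (c t)))⁻¹ * c' t := by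
  filter_upwards [h1.eventually_nhds] with t ht
  exact ((hasDerivWithinAt_half_sq_arcosh ht.self_of_nhds).comp_hasDerivAt t (hc t) ht).deriv

lemma hasDerivAt_deriv_half_sq_arcosh_comp_of_eq_one (hc : ∀ t, HasDerivAt c (c' t) t)
    (h1 : ∀ᶠ t in 𝓝 x, 1 ≤ c t) (hcx : c x = 1) (hc'x : c' x = 0) (hc' : HasDerivAt c' c'' x) :
    HasDerivAt (deriv (fun t => 1 / 2 * arcosh (c t) ^ 2)) c'' x := by
  refine HasDerivAt.congr_of_eventuallyEq ?_ (deriv_half_sq_arcosh_comp_eventuallyEq hc h1)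
  have hcx' : Tendsto c (𝓝[≠] x) (𝓝[≥] 1) := tendsto_nhdsWithin_iff.2
    ⟨hcx ▸ (hc x).continuousAt.tendsto.mono_left nhdsWithin_le_nhds,
      eventually_nhdsWithin_of_eventually_nhds h1⟩
  have h := (tendsto_inv_sinhc_arcosh_one.comp hcx').mul (hasDerivAt_iff_tendsto_slope.1 hc')
  rw [one_mul] at h
  -- as `c' x = 0`, the slope of `φ * c'` at `x` is `φ` times that of `c'`, for any `φ`
  refine hasDerivAt_iff_tendsto_slope.2 (h.congr fun t => ?_)
  simp [slope_def_field, hc'x, mul_div_assoc]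

lemma hasDerivAt_deriv_half_sq_arcosh_comp_of_one_lt (hc : ∀ t, HasDerivAt c (c' t) t)
    (hcx : 1 < c x) (hc' : HasDerivAt c' c'' x) :
    HasDerivAt (deriv (fun t => 1 / 2 * arcosh (c t) ^ 2))
      ((1 - c x * (arcosh (c x) / √(c x ^ 2 - 1))) / (c x ^ 2 - 1) * c' x ^ 2
        + arcosh (c x) / √(c x ^ 2 - 1) * c'') x := by
  have hgt : ∀ᶠ t in 𝓝 x, 1 < c t := (hc x).continuousAt.eventually (lt_mem_nhds hcx)
  have hE' : deriv (fun t => 1 / 2 * arcosh (c t) ^ 2) =ᶠ[𝓝 x]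
      fun t => arcosh (c t) / √(c t ^ 2 - 1) * c' t :=
    (deriv_half_sq_arcosh_comp_eventuallyEq hc (hgt.mono fun t ht => ht.le)).trans
      (hgt.mono fun t ht => by simp only [inv_sinhc_arcosh ht])
  refine HasDerivAt.congr_of_eventuallyEq ?_ hE'
  have hpos : 0 < c x ^ 2 - 1 := by nlinarith
  have hsqrt : HasDerivAt (fun t => √(c t ^ 2 - 1)) (2 * c x * c' x / (2 * √(c x ^ 2 - 1))) x := by
    simpa using (((hc x).pow 2).sub_const 1).sqrt hpos.ne'
  refine ((((hasDerivAt_arcosh hcx).comp x (hc x)).div hsqrt (sqrt_pos.2 hpos).ne').mul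
    hc').congr_deriv ?_
  simp only [Function.comp_apply, Pi.div_apply]
  set s := √(c x ^ 2 - 1) with hs
  have hs0 : s ≠ 0 := (sqrt_pos.2 hpos).ne'
  rw [← sq_sqrt hpos.le, ← hs]
  field_simp

end HalfSqArcosh

lemma sinh_le_mul_cosh {x : ℝ} (hx : 0 ≤ x) : sinh x ≤ x * cosh x := by
  rcases hx.eq_or_lt with rfl | hx
  · simp
  obtain ⟨c, hc, hslope⟩ := exists_hasDerivAt_eq_slope sinh cosh hx continuous_sinh.continuousOn
    fun y _ => hasDerivAt_sinh y
  have hcosh : cosh c ≤ cosh x :=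
    cosh_le_cosh.2 (by rw [abs_of_pos hc.1, abs_of_pos hx]; exact hc.2.le)
  rw [sinh_zero, sub_zero, sub_zero, eq_div_iff hx.ne'] at hslope
  nlinarith

lemma two_mul_sinh_le_mul_cosh_add_one {x : ℝ} (hx : 0 ≤ x) : 2 * sinh x ≤ x * (cosh x + 1) := by
  have h := sinh_le_mul_cosh (x := x / 2) (by positivity)
  have hsinh : sinh x = 2 * sinh (x / 2) * cosh (x / 2) := by rw [← sinh_two_mul]; ring_nf
  have hcosh : cosh x = cosh (x / 2) ^ 2 + sinh (x / 2) ^ 2 := by rw [← cosh_two_mul]; ring_nf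
  rw [hsinh, hcosh]
  nlinarith [mul_le_mul_of_nonneg_left h (cosh_pos (x / 2)).le, cosh_sq_sub_sinh_sq (x / 2)]

lemma sq_sub_ptrans_le_of_gram {k p q m a2 b2 X Y : ℝ} (hk : 1 < k)
    (hX : X ^ 2 = (k ^ 2 - 1) * a2 - q ^ 2) (hY : Y ^ 2 = (k ^ 2 - 1) * b2 - p ^ 2)
    (hXY : X * Y = (k ^ 2 - 1) * m + k * p * q) :
    a2 + b2 - 2 * m - 2 * (p * q) / (1 + k)
      ≤ (1 - k * (arcosh k / √(k ^ 2 - 1))) / (k ^ 2 - 1) * (q + p) ^ 2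
        + arcosh k / √(k ^ 2 - 1) * (k * (a2 + b2) - 2 * m) := by
  set d := arcosh k
  set s := √(k ^ 2 - 1)
  have hs2 : s ^ 2 = k ^ 2 - 1 := sq_sqrt (by nlinarith)
  have hs : 0 < s := sqrt_pos.2 (by nlinarith)
  have hd : 0 ≤ d := arcosh_nonneg hk.le
  have hds : 2 * s ≤ d * (k + 1) := by
    simpa [d, s, cosh_arcosh hk.le, sinh_arcosh hk.le] using two_mul_sinh_le_mul_cosh_add_one hd
  have key : s * (X - Y) ^ 2 ≤ d * (k * (X ^ 2 + Y ^ 2) - 2 * (X * Y)) := by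
    nlinarith [sq_nonneg (X - Y), sq_nonneg (X + Y), mul_nonneg hd (sq_nonneg (X + Y))]
  have ha2 : a2 = (X ^ 2 + q ^ 2) / s ^ 2 := by
    rw [eq_div_iff (pow_pos hs 2).ne', hs2]; linarith
  have hb2 : b2 = (Y ^ 2 + p ^ 2) / s ^ 2 := by
    rw [eq_div_iff (pow_pos hs 2).ne', hs2]; linarith
  have hm : m = (X * Y - k * p * q) / s ^ 2 := by
    rw [eq_div_iff (pow_pos hs 2).ne', hs2]; linarith
  have hdiff : (1 - k * (d / s)) / (k ^ 2 - 1) * (q + p) ^ 2 + d / s * (k * (a2 + b2) - 2 * m)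
      - (a2 + b2 - 2 * m - 2 * (p * q) / (1 + k))
      = (d * (k * (X ^ 2 + Y ^ 2) - 2 * (X * Y)) - s * (X - Y) ^ 2) / s ^ 3 := by
    rw [ha2, hb2, hm, ← hs2]
    field_simp
    linear_combination (2 * s * p * q) * hs2
  have := div_nonneg (sub_nonneg.2 key) (pow_pos hs 3).le
  linarith

section Hyperbolic2

variable {A B u v : Fin 3 → ℝ}

lemma det3_mul_det3 (x y z w : Fin 3 → ℝ) :
    det3 x y z * det3 x y w =
      -(mink 2 x x * (mink 2 y y * mink 2 z w - mink 2 y w * mink 2 z y)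
        - mink 2 x y * (mink 2 y x * mink 2 z w - mink 2 y w * mink 2 z x)
        + mink 2 x w * (mink 2 y x * mink 2 z y - mink 2 y y * mink 2 z x)) := by
  simp [det3, mink, Fin.sum_univ_two]
  ring

lemma det3_mul_det3_of_mink_self {x y : Fin 3 → ℝ} (hx : mink 2 x x = -1) (hy : mink 2 y y = -1)
    (z w : Fin 3 → ℝ) :
    det3 x y z * det3 x y w = (mink 2 x y ^ 2 - 1) * mink 2 z w - mink 2 y w * mink 2 z y
      - mink 2 x w * mink 2 z x
      - mink 2 x y * (mink 2 y w * mink 2 z x + mink 2 x w * mink 2 z y) := by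
  rw [det3_mul_det3, hx, hy, mink_comm y x]
  ring

lemma mink_eq_zero_of_mink_eq_neg_one (hA : mink 2 A A = -1) (hB : mink 2 B B = -1)
    (hu : IsTang 2 A u) (hv : IsTang 2 B v) (hAB : mink 2 A B = -1) :
    mink 2 A v = 0 ∧ mink 2 u B = 0 := by
  unfold IsTang at hu hv
  have hX := det3_mul_det3_of_mink_self hA hB u u
  have hY := det3_mul_det3_of_mink_self hA hB v v
  simp only [mink_comm u A, mink_comm B u, mink_comm v A, mink_comm v B, hu, hv, hAB] at hX hY
  constructor <;> refine pow_eq_zero_iff two_ne_zero |>.1 ?_ <;>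
    nlinarith [mul_self_nonneg (det3 A B u), mul_self_nonneg (det3 A B v)]

lemma mink_sub_ptrans_self_le {k : ℝ} (hA : IsHyp 2 A) (hB : IsHyp 2 B) (hu : IsTang 2 A u)
    (hv : IsTang 2 B v) (hAB : mink 2 A B = -k) (hk : 1 < k) :
    mink 2 (u - ptrans 2 A B v) (u - ptrans 2 A B v)
      ≤ (1 - k * (arcosh k / √(k ^ 2 - 1))) / (k ^ 2 - 1) * (mink 2 u B + mink 2 A v) ^ 2
        + arcosh k / √(k ^ 2 - 1) * (k * (mink 2 u u + mink 2 v v) - 2 * mink 2 u v) := by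
  rw [mink_sub_ptrans_self hA.1 hB.1 hu hv (by linarith), hAB, sub_neg_eq_add]
  unfold IsTang at hu hv
  have hX := det3_mul_det3_of_mink_self hA.1 hB.1 u u
  have hY := det3_mul_det3_of_mink_self hA.1 hB.1 v v
  have hXY := det3_mul_det3_of_mink_self hA.1 hB.1 u v
  simp only [mink_comm u A, mink_comm B u, mink_comm v A, mink_comm v B, hu, hv, hAB] at hX hY hXY
  exact sq_sub_ptrans_le_of_gram (p := mink 2 A v) (q := mink 2 u B) (m := mink 2 u v)
    (a2 := mink 2 u u) (b2 := mink 2 v v) (X := det3 A B u) (Y := det3 A B v) hk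
    (by rw [sq, hX]; ring) (by rw [sq, hY]; ring) (by rw [hXY]; ring)

end Hyperbolic2

/-- `E''(0) ≥ ‖u - P v‖²` where `P` is parallel transport from `B` to `A`
along the geodesic segment, and `E(t) = ½ d(exp_A(tu), exp_B(tv))²`. Note that
`u - ptrans 2 A B v` is a tangent vector at `A`, so its squared norm is its Minkowski
square `mink 2 w w`. -/
theorem stmt4 (A B u v : Fin 3 → ℝ)
    (hA : IsHyp 2 A) (hB : IsHyp 2 B)
    (hu : IsTang 2 A u) (hv : IsTang 2 B v) :
    mink 2 (u - ptrans 2 A B v) (u - ptrans 2 A B v)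
      ≤ deriv (deriv (fun t : ℝ =>
          (1/2) * (hdist 2 (hexp 2 A (t • u)) (hexp 2 B (t • v))) ^ 2)) 0 := by
  simp only [hdist_hexp_smul hA hu hB hv]
  obtain ⟨c', hc, hc'0, hc'⟩ := hasDerivAt_neg_mink_geodesic (tnorm 2 u) (tnorm 2 v) A B u v
  rw [hA.tnorm_sq hu, hB.tnorm_sq hv] at hc'
  rcases (hA.one_le_neg_mink hB).eq_or_lt with hk | hk
  · have hAB : mink 2 A B = -1 := by linarith
    obtain ⟨hp, hq⟩ := mink_eq_zero_of_mink_eq_neg_one hA.1 hB.1 hu hv hAB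
    rw [(hasDerivAt_deriv_half_sq_arcosh_comp_of_eq_one hc
      (eventually_one_le_neg_mink_geodesic hA hu hB hv) (by simp [hAB])
      (by simp [hc'0, hp, hq]) hc').deriv,
      mink_sub_ptrans_self hA.1 hB.1 hu hv (by norm_num [hAB]), hp, hAB]
    apply le_of_eq
    ring
  · rw [(hasDerivAt_deriv_half_sq_arcosh_comp_of_one_lt hc (by simpa using hk) hc').deriv]
    refine (mink_sub_ptrans_self_le hA hB hu hv (neg_neg _).symm hk).trans_eq ?_
    simp only [geodesic_zero, hc'0]
    ring
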